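/- arXiv:2310.02481 — 2 statements merged into one kernel-verified Lean document; each statement's English description precedes it below -/
import Mathlib

section
/- With M_s as above (s ∈ (0,1)), lim_{|z|→∞} |z|^{N+2s} M_s(z) = 1. -/
open MeasureTheory Filter

theorem Ms_limit_at_infty (N : ℕ) (hN : 1 ≤ N) (s : ℝ) (hs : s ∈ Set.Ioo (0:ℝ) 1) :
    Tendsto (fun z : EuclideanSpace ℝ (Fin N) =>
        ‖z‖ ^ ((N:ℝ) + 2*s) * ∫ t in Set.Ioi (0:ℝ),
          min (t / ‖z‖ ^ ((N:ℝ) + 2*s)) (t ^ (-(N:ℝ)/(2*s))) * Real.exp (-t) / t)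
      (Filter.comap (fun z : EuclideanSpace ℝ (Fin N) => ‖z‖) atTop) (nhds 1) := by
  obtain ⟨hs0, hs1⟩ := hs
  set p : ℝ := -(N:ℝ)/(2*s) with hp
  set F : ℝ → ℝ := fun a => ∫ t in Set.Ioi (0:ℝ),
    min t (a * t ^ p) * Real.exp (-t) / t with hFdef
  have hexp : (1:ℝ) = ∫ t in Set.Ioi (0:ℝ), Real.exp (-t) :=
    integral_exp_neg_Ioi_zero.symm
  have hFlim : Tendsto F atTop (nhds 1) := by
    rw [hexp]
    apply tendsto_integral_filter_of_dominated_convergence (fun t => Real.exp (-t))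
    · filter_upwards with a
      apply ContinuousOn.aestronglyMeasurable _ measurableSet_Ioi
      have hrpow : ContinuousOn (fun t : ℝ => t ^ p) (Set.Ioi 0) := fun t ht =>
        (Real.continuousAt_rpow_const t p (Or.inl (ne_of_gt ht))).continuousWithinAt
      exact ((continuousOn_id.inf (continuousOn_const.mul hrpow)).mul
        ((Real.continuous_exp.comp continuous_neg).continuousOn)).div
        continuousOn_id (fun t ht => ne_of_gt ht)
    · filter_upwards [eventually_ge_atTop (0:ℝ)] with a ha
      rw [ae_restrict_iff' measurableSet_Ioi]
      filter_upwards with t ht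
      have ht0 : 0 < t := ht
      have hmin0 : 0 ≤ min t (a * t ^ p) :=
        le_min ht0.le (mul_nonneg ha (Real.rpow_nonneg ht0.le _))
      have hmint : min t (a * t ^ p) ≤ t := min_le_left _ _
      rw [Real.norm_eq_abs, abs_of_nonneg (by positivity)]
      rw [div_le_iff₀ ht0]
      calc min t (a * t ^ p) * Real.exp (-t) ≤ t * Real.exp (-t) :=
            mul_le_mul_of_nonneg_right hmint (Real.exp_pos _).le
        _ = Real.exp (-t) * t := by ring
    · exact exp_neg_integrableOn_Ioi 0 one_pos |>.congr_fun
        (fun t _ => by norm_num) measurableSet_Ioi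
    · rw [ae_restrict_iff' measurableSet_Ioi]
      filter_upwards with t ht
      have ht0 : 0 < t := ht
      have htp : 0 < t ^ p := Real.rpow_pos_of_pos ht0 _
      apply Tendsto.congr' _ tendsto_const_nhds
      filter_upwards [eventually_ge_atTop (t / t ^ p)] with a ha
      have : t ≤ a * t ^ p := by
        rw [div_le_iff₀ htp] at ha; linarith
      rw [min_eq_left this, mul_comm, mul_div_assoc, div_self (ne_of_gt ht0), mul_one]
  have hnorm : Tendsto (fun z : EuclideanSpace ℝ (Fin N) => ‖z‖)
      (Filter.comap (fun z : EuclideanSpace ℝ (Fin N) => ‖z‖) atTop) atTop :=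
    tendsto_comap
  have hNs : (0:ℝ) < (N:ℝ) + 2*s := by
    have : (1:ℝ) ≤ (N:ℝ) := by exact_mod_cast hN
    linarith
  have ha : Tendsto (fun z : EuclideanSpace ℝ (Fin N) => ‖z‖ ^ ((N:ℝ) + 2*s))
      (Filter.comap (fun z : EuclideanSpace ℝ (Fin N) => ‖z‖) atTop) atTop :=
    (tendsto_rpow_atTop hNs).comp hnorm
  refine (hFlim.comp ha).congr' ?_
  filter_upwards [hnorm.eventually (eventually_gt_atTop (0:ℝ))] with z hz
  have ha0 : 0 < ‖z‖ ^ ((N:ℝ) + 2*s) := Real.rpow_pos_of_pos hz _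
  set a := ‖z‖ ^ ((N:ℝ) + 2*s)
  show F a = a * _
  rw [hFdef]
  simp only
  rw [← integral_const_mul]
  congr 1
  funext t
  rw [show a * (min (t / a) (t ^ p) * Real.exp (-t) / t)
      = (a * min (t / a) (t ^ p)) * Real.exp (-t) / t by ring,
    mul_min_of_nonneg _ _ ha0.le, mul_comm a (t / a), div_mul_cancel₀ t (ne_of_gt ha0)]
end

section
/- Let N ≥ 1 and define for x ∈ ℝ^N \ {0} the kernel K_{1/2}(x) := γ_N |x|^{-N} ∫₀^∞ e^{-t|x|} (t²+1)^{-(N+1)/2} dt with γ_N = Γ((N+1)/2) π^{-(N+1)/2}. Then lim_{|x|→0} |x|^N K_{1/2}(x) = Γ(N/2)/(2π^{N/2}) and lim_{|x|→∞} |x|^{N+1} K_{1/2}(x) = γ_N. -/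
/-!
Both limits are statements about the Laplace transform
`I r = ∫₀^∞ e^{-tr} (t² + 1)^{-(N+1)/2} dt` of a bounded integrable function. Dominated
convergence gives `I r → ∫₀^∞ (t² + 1)^{-(N+1)/2} dt` as `r → 0⁺`, and, after the substitution
`s = r t`, `r * I r → 1` as `r → ∞`. Differentiating `t (t² + 1)^{-c}` gives the recursion
`J (c + 1) = (2c - 1) / (2c) * J c` for `J c = ∫₀^∞ (t² + 1)^{-c} dt`, the recursion of
`√π Γ(c - 1/2) / (2 Γ(c))`; with `J 1 = π/2` and `J (3/2) = 1` this evaluates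
`J ((N+1)/2) = √π Γ(N/2) / (2 Γ((N+1)/2))`.
-/

open MeasureTheory Filter Set Real Topology

lemma hasDerivAt_mul_rpow_neg_sq_add_one (c t : ℝ) :
    HasDerivAt (fun t : ℝ => t * (t ^ 2 + 1) ^ (-c))
      ((1 - 2 * c) * (t ^ 2 + 1) ^ (-c) + 2 * c * (t ^ 2 + 1) ^ (-(c + 1))) t := by
  have hpos : 0 < t ^ 2 + 1 := by positivity
  have hsq : HasDerivAt (fun t : ℝ => t ^ 2 + 1) (2 * t) t := by
    simpa using (hasDerivAt_pow 2 t).add_const 1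
  refine ((hasDerivAt_id t).mul (hsq.rpow_const (p := -c) (Or.inl hpos.ne'))).congr_deriv ?_
  have hsplit : (t ^ 2 + 1) ^ (-c) = (t ^ 2 + 1) * (t ^ 2 + 1) ^ (-(c + 1)) := by
    rw [mul_comm, ← rpow_add_one hpos.ne']; ring_nf
  rw [show -c - 1 = -(c + 1) by ring, hsplit, id]
  ring

lemma tendsto_mul_rpow_neg_sq_add_one_atTop_zero {c : ℝ} (hc : 1 / 2 < c) :
    Tendsto (fun t : ℝ => t * (t ^ 2 + 1) ^ (-c)) atTop (𝓝 0) := by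
  refine squeeze_zero' ?_ ?_ (tendsto_rpow_neg_atTop (by linarith : 0 < 2 * c - 1))
  · filter_upwards [eventually_ge_atTop 0] with t ht
    positivity
  · filter_upwards [eventually_gt_atTop 0] with t ht
    calc t * (t ^ 2 + 1) ^ (-c) ≤ t * (t ^ 2) ^ (-c) :=
          mul_le_mul_of_nonneg_left
            (rpow_le_rpow_of_nonpos (by positivity) (by linarith) (by linarith)) ht.le
      _ = t ^ (-(2 * c - 1)) := by
          rw [← rpow_natCast, ← rpow_mul ht.le, show -(2 * c - 1) = 1 + (2 : ℕ) * -c by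
            push_cast; ring, rpow_add ht, rpow_one]

lemma tendsto_mul_rpow_neg_half_sq_add_one_atTop :
    Tendsto (fun t : ℝ => t * (t ^ 2 + 1) ^ (-(1 / 2) : ℝ)) atTop (𝓝 1) := by
  have h : Tendsto (fun t : ℝ => (1 + (t ^ 2)⁻¹) ^ (-(1 / 2) : ℝ)) atTop (𝓝 1) := by
    simpa using (tendsto_const_nhds (x := (1 : ℝ)).add
      (tendsto_pow_atTop two_ne_zero).inv_tendsto_atTop).rpow_const
      (p := -(1 / 2)) (Or.inl (by norm_num))
  refine h.congr' ?_
  filter_upwards [eventually_gt_atTop 0] with t ht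
  rw [show 1 + (t ^ 2)⁻¹ = (t ^ 2 + 1) * (t ^ 2)⁻¹ by field_simp,
    mul_rpow (by positivity) (by positivity), inv_rpow (by positivity), ← rpow_natCast,
    ← rpow_mul ht.le]
  norm_num [rpow_neg_one, mul_comm]

lemma integrable_rpow_neg_sq_add_one {a : ℝ} (ha : 1 / 2 < a) :
    Integrable (fun t : ℝ => (t ^ 2 + 1) ^ (-a)) := by
  have h := integrable_rpow_neg_one_add_norm_sq (E := ℝ) (μ := volume) (r := 2 * a)
    (by rw [Module.finrank_self]; push_cast; linarith)
  convert h using 2 with t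
  rw [norm_eq_abs, sq_abs, add_comm]
  ring_nf

lemma integral_Ioi_rpow_neg_sq_add_one_add_one {c : ℝ} (hc : 1 / 2 < c) :
    ∫ t in Ioi (0 : ℝ), (t ^ 2 + 1) ^ (-(c + 1)) =
      (2 * c - 1) / (2 * c) * ∫ t in Ioi (0 : ℝ), (t ^ 2 + 1) ^ (-c) := by
  have hint := (integrable_rpow_neg_sq_add_one hc).integrableOn (s := Ioi 0)
  have hint' := (integrable_rpow_neg_sq_add_one (a := c + 1) (by linarith)).integrableOn
    (s := Ioi 0)
  have hFTC := integral_Ioi_of_hasDerivAt_of_tendsto'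
    (fun t _ => hasDerivAt_mul_rpow_neg_sq_add_one c t)
    ((hint.const_mul _).add (hint'.const_mul _))
    (tendsto_mul_rpow_neg_sq_add_one_atTop_zero hc)
  rw [integral_add (hint.const_mul _) (hint'.const_mul _), integral_const_mul,
    integral_const_mul, zero_mul, sub_zero] at hFTC
  field_simp
  linarith

lemma integral_Ioi_inv_sq_add_one :
    ∫ t in Ioi (0 : ℝ), (t ^ 2 + 1) ^ (-1 : ℝ) = π / 2 := by
  simp only [rpow_neg_one, add_comm _ (1 : ℝ), integral_Ioi_inv_one_add_sq, arctan_zero,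
    sub_zero]

lemma integral_Ioi_rpow_neg_three_halves_sq_add_one :
    ∫ t in Ioi (0 : ℝ), (t ^ 2 + 1) ^ (-(3 / 2) : ℝ) = 1 := by
  have hderiv (t : ℝ) : HasDerivAt (fun t : ℝ => t * (t ^ 2 + 1) ^ (-(1 / 2) : ℝ))
      ((t ^ 2 + 1) ^ (-(3 / 2) : ℝ)) t := by
    convert hasDerivAt_mul_rpow_neg_sq_add_one (1 / 2) t using 1
    norm_num
  simpa using integral_Ioi_of_hasDerivAt_of_tendsto' (a := 0) (fun t _ => hderiv t)
    (integrable_rpow_neg_sq_add_one (by norm_num)).integrableOn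
    tendsto_mul_rpow_neg_half_sq_add_one_atTop

theorem integral_Ioi_rpow_neg_sq_add_one_natCast_half :
    ∀ n : ℕ, 1 ≤ n → ∫ t in Ioi (0 : ℝ), (t ^ 2 + 1) ^ (-(((n : ℝ) + 1) / 2)) =
      √π * Gamma ((n : ℝ) / 2) / (2 * Gamma (((n : ℝ) + 1) / 2))
  | 1, _ => by
    have hπ := mul_self_sqrt pi_pos.le
    norm_num [integral_Ioi_inv_sq_add_one, Gamma_one_half_eq]
    grind
  | 2, _ => by
    have hΓ : Gamma (3 / 2) = √π / 2 := by
      rw [show (3 / 2 : ℝ) = 1 / 2 + 1 by norm_num, Gamma_add_one (by norm_num),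
        Gamma_one_half_eq]
      ring
    have hπ := sqrt_pos.mpr pi_pos
    norm_num [integral_Ioi_rpow_neg_three_halves_sq_add_one, hΓ]
    field_simp
  | n + 3, _ => by
    have hrec := integral_Ioi_rpow_neg_sq_add_one_natCast_half (n + 1) (by omega)
    push_cast at hrec ⊢
    rw [show ((n : ℝ) + 3 + 1) / 2 = ((n : ℝ) + 1 + 1) / 2 + 1 by ring,
      integral_Ioi_rpow_neg_sq_add_one_add_one (by linarith [n.cast_nonneg (α := ℝ)]), hrec,
      show ((n : ℝ) + 3) / 2 = ((n : ℝ) + 1) / 2 + 1 by ring, Gamma_add_one (by positivity),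
      Gamma_add_one (by positivity)]
    have := Gamma_pos_of_pos (s := ((n : ℝ) + 1) / 2) (by positivity)
    have := Gamma_pos_of_pos (s := ((n : ℝ) + 1 + 1) / 2) (by positivity)
    field_simp
    ring

lemma tendsto_setIntegral_exp_neg_mul_nhdsGT_zero {f : ℝ → ℝ} (hf : IntegrableOn f (Ioi 0)) :
    Tendsto (fun r => ∫ t in Ioi (0 : ℝ), exp (-(t * r)) * f t) (𝓝[>] 0)
      (𝓝 (∫ t in Ioi (0 : ℝ), f t)) := by
  refine tendsto_integral_filter_of_dominated_convergence (fun t => ‖f t‖)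
    (Eventually.of_forall fun r => (by fun_prop : Continuous fun t => exp (-(t * r)))
      |>.aestronglyMeasurable.mul hf.aestronglyMeasurable) ?_ hf.norm ?_
  · filter_upwards [self_mem_nhdsWithin] with r (hr : 0 < r)
    filter_upwards [ae_restrict_mem measurableSet_Ioi] with t (ht : 0 < t)
    rw [norm_mul, norm_of_nonneg (exp_pos _).le]
    exact mul_le_of_le_one_left (norm_nonneg _)
      (exp_le_one_iff.mpr (neg_nonpos.mpr (mul_pos ht hr).le))
  · refine Eventually.of_forall fun t => ?_
    have h : Tendsto (fun r => exp (-(t * r))) (𝓝 0) (𝓝 1) := by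
      simpa using ((by fun_prop : Continuous fun r => exp (-(t * r))).tendsto 0)
    simpa using (h.mono_left nhdsWithin_le_nhds).mul_const (f t)

lemma tendsto_mul_setIntegral_exp_neg_mul_atTop {f : ℝ → ℝ} {C : ℝ} (hf : Continuous f)
    (hC : ∀ t, |f t| ≤ C) :
    Tendsto (fun r => r * ∫ t in Ioi (0 : ℝ), exp (-(t * r)) * f t) atTop (𝓝 (f 0)) := by
  have hlim : Tendsto (fun r => ∫ s in Ioi (0 : ℝ), exp (-s) * f (s / r)) atTop
      (𝓝 (∫ s in Ioi (0 : ℝ), exp (-s) * f 0)) := by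
    refine tendsto_integral_filter_of_dominated_convergence (fun s => C * exp (-s))
      (Eventually.of_forall fun r => (by fun_prop : Continuous fun s => exp (-s) * f (s / r))
        |>.aestronglyMeasurable) ?_ ((integrableOn_exp_neg_Ioi 0).const_mul C) ?_
    · refine Eventually.of_forall fun r => Eventually.of_forall fun s => ?_
      rw [norm_mul, norm_of_nonneg (exp_pos _).le, mul_comm, norm_eq_abs]
      exact mul_le_mul_of_nonneg_right (hC _) (exp_pos _).le
    · refine Eventually.of_forall fun s => ((continuous_const.mul hf).tendsto 0).comp ?_
      simpa using tendsto_const_nhds.div_atTop tendsto_id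
  rw [integral_mul_const, integral_exp_neg_Ioi_zero, one_mul] at hlim
  refine hlim.congr' ?_
  filter_upwards [eventually_gt_atTop 0] with r hr
  have hsub := integral_comp_mul_left_Ioi (fun s => exp (-s) * f (s / r)) 0 hr
  simp only [mul_zero, smul_eq_mul, mul_div_cancel_left₀ _ hr.ne'] at hsub
  simp only [mul_comm r] at hsub
  rw [hsub, mul_inv_cancel_left₀ hr.ne']

lemma Gamma_div_pi_rpow_mul_integral_Ioi_rpow_neg_sq_add_one {n : ℕ} (hn : 1 ≤ n) :
    Gamma (((n : ℝ) + 1) / 2) / π ^ (((n : ℝ) + 1) / 2) *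
        ∫ t in Ioi (0 : ℝ), (t ^ 2 + 1) ^ (-(((n : ℝ) + 1) / 2)) =
      Gamma ((n : ℝ) / 2) / (2 * π ^ ((n : ℝ) / 2)) := by
  have := Gamma_pos_of_pos (s := ((n : ℝ) + 1) / 2) (by positivity)
  rw [integral_Ioi_rpow_neg_sq_add_one_natCast_half n hn, add_div, rpow_add pi_pos,
    ← sqrt_eq_rpow]
  field_simp

lemma abs_rpow_neg_sq_add_one_le_one {a : ℝ} (ha : 0 ≤ a) (t : ℝ) :
    |(t ^ 2 + 1) ^ (-a)| ≤ 1 := by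
  rw [abs_of_nonneg (by positivity)]
  exact rpow_le_one_of_one_le_of_nonpos (by nlinarith) (by linarith)

theorem K_half_asymptotics (N : ℕ) (hN : 1 ≤ N) :
    Tendsto (fun x : EuclideanSpace ℝ (Fin N) =>
        ‖x‖ ^ (N:ℝ) *
          ((Real.Gamma (((N:ℝ)+1)/2) / Real.pi ^ (((N:ℝ)+1)/2)) * ‖x‖ ^ (-(N:ℝ)) *
            ∫ t in Set.Ioi (0:ℝ), Real.exp (-(t * ‖x‖)) * (t^2 + 1) ^ (-((N:ℝ)+1)/2)))
      (nhdsWithin 0 {0}ᶜ) (nhds (Real.Gamma ((N:ℝ)/2) / (2 * Real.pi ^ ((N:ℝ)/2)))) ∧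
    Tendsto (fun x : EuclideanSpace ℝ (Fin N) =>
        ‖x‖ ^ ((N:ℝ) + 1) *
          ((Real.Gamma (((N:ℝ)+1)/2) / Real.pi ^ (((N:ℝ)+1)/2)) * ‖x‖ ^ (-(N:ℝ)) *
            ∫ t in Set.Ioi (0:ℝ), Real.exp (-(t * ‖x‖)) * (t^2 + 1) ^ (-((N:ℝ)+1)/2)))
      (Filter.comap (fun x : EuclideanSpace ℝ (Fin N) => ‖x‖) atTop)
      (nhds (Real.Gamma (((N:ℝ)+1)/2) / Real.pi ^ (((N:ℝ)+1)/2))) := by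
  have ha : 1 / 2 < ((N : ℝ) + 1) / 2 := by
    have : (1 : ℝ) ≤ N := by exact_mod_cast hN
    linarith
  set γ := Gamma (((N : ℝ) + 1) / 2) / π ^ (((N : ℝ) + 1) / 2)
  simp only [neg_div]
  constructor
  · have h := (tendsto_setIntegral_exp_neg_mul_nhdsGT_zero
      (integrable_rpow_neg_sq_add_one ha).integrableOn).comp
      (tendsto_norm_nhdsNE_zero (E := EuclideanSpace ℝ (Fin N))) |>.const_mul γ
    rw [Gamma_div_pi_rpow_mul_integral_Ioi_rpow_neg_sq_add_one hN] at h
    refine h.congr' ?_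
    filter_upwards [self_mem_nhdsWithin] with x (hx : x ≠ 0)
    rw [Function.comp_apply, rpow_neg (norm_nonneg x), mul_comm γ (_⁻¹), mul_assoc,
      mul_inv_cancel_left₀ (rpow_pos_of_pos (norm_pos_iff.mpr hx) _).ne']
  · have hf : Continuous fun t : ℝ => (t ^ 2 + 1) ^ (-(((N : ℝ) + 1) / 2)) :=
      Continuous.rpow_const (by fun_prop) fun t => Or.inl (by positivity)
    have hnorm := tendsto_comap (f := fun x : EuclideanSpace ℝ (Fin N) => ‖x‖) (x := atTop)
    have h := (tendsto_mul_setIntegral_exp_neg_mul_atTop hf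
      (abs_rpow_neg_sq_add_one_le_one (by positivity))).comp hnorm |>.const_mul γ
    rw [zero_pow two_ne_zero, zero_add, one_rpow, mul_one] at h
    refine h.congr' ?_
    filter_upwards [hnorm.eventually (eventually_gt_atTop 0)] with x (hx : 0 < ‖x‖)
    rw [Function.comp_apply, rpow_neg hx.le, rpow_add_one hx.ne']
    field_simp
end
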